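/- arXiv:1308.4781 — 3 statements merged into one kernel-verified Lean document; each statement's English description precedes it below -/
import Mathlib

section
/- Let a, b, c, d, g, h ∈ ℂⁿ with a ⊥ b, and set A = a⊗b, B = c⊗d, D = g⊗h. Assume additionally that a, b are mutually orthogonal (which they are by hypothesis). Then ⟨[D*,A],[B,A*]⟩ = −2·⟨A,B⟩·⟨A,D⟩, where ⟨X,Y⟩ = trace(X∘Y*). (This is the case C = A of the general commutator identity.) -/
open Matrix BigOperators

/-- Hermitian inner product on ℂⁿ, conjugate-linear in the second slot. -/
noncomputable def herm {n : ℕ} (a b : Fin n → ℂ) : ℂ := ∑ i, a i * star (b i)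

/-- Rank-one endomorphism a⊗b : v ↦ ⟨v,b⟩·a, as a matrix. -/
noncomputable def rk {n : ℕ} (a b : Fin n → ℂ) : Matrix (Fin n) (Fin n) ℂ :=
  fun i j => a i * star (b j)

/-- Frobenius Hermitian inner product ⟨X,Y⟩ = trace (X Yᴴ). -/
noncomputable def frob {n : ℕ} (X Y : Matrix (Fin n) (Fin n) ℂ) : ℂ := (X * Yᴴ).trace

/-- Commutator [X,Y] = XY - YX. -/
noncomputable def mcomm {n : ℕ} (X Y : Matrix (Fin n) (Fin n) ℂ) : Matrix (Fin n) (Fin n) ℂ :=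
  X * Y - Y * X

lemma rk_conjT {n : ℕ} (a b : Fin n → ℂ) : (rk a b)ᴴ = rk b a := by
  ext i j
  simp [rk, Matrix.conjTranspose_apply, mul_comm]

lemma rk_mul {n : ℕ} (a b c d : Fin n → ℂ) : rk a b * rk c d = herm c b • rk a d := by
  ext i j
  simp only [rk, herm, Matrix.mul_apply, Matrix.smul_apply, smul_eq_mul, Finset.sum_mul]
  rw [Finset.sum_congr rfl]
  intro k _
  ring

lemma trace_rk {n : ℕ} (a b : Fin n → ℂ) : (rk a b).trace = herm a b := by
  simp [Matrix.trace, rk, herm, Matrix.diag]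

lemma star_herm {n : ℕ} (a b : Fin n → ℂ) : star (herm a b) = herm b a := by
  simp [herm, star_sum, mul_comm]

theorem frob_comm_rankOne_diag_case {n : ℕ} (a b c d g h : Fin n → ℂ)
    (hab : herm a b = 0) :
    frob (mcomm (rk g h)ᴴ (rk a b)) (mcomm (rk c d) (rk a b)ᴴ)
      = -2 * frob (rk a b) (rk c d) * frob (rk a b) (rk g h) := by
  simp only [frob, mcomm, rk_conjT, rk_mul]
  rw [Matrix.conjTranspose_sub]
  simp only [Matrix.conjTranspose_smul, rk_conjT, star_herm]
  simp only [Matrix.sub_mul, Matrix.mul_sub, Matrix.smul_mul, Matrix.mul_smul, rk_mul,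
    smul_smul, Matrix.trace_sub, Matrix.trace_smul, trace_rk, smul_eq_mul, hab,
    mul_zero, zero_mul]
  ring
end

section
/- Let H be an n×n complex matrix with n distinct eigenvalues, and let N be a nonzero nilpotent n×n complex matrix. Then there exists an n×n complex matrix X with trace(X·H·N*) ≠ trace(H·X·N*); equivalently, ⟨[X,H], N⟩ ≠ 0 for the Frobenius inner product ⟨A,B⟩ = trace(A·B*). -/
open Matrix BigOperators

theorem exists_nonvanishing_pairing {n : ℕ} (H N P : Matrix (Fin n) (Fin n) ℂ)
    [Invertible P] (d : Fin n → ℂ) (hd : Function.Injective d)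
    (hH : H = P * Matrix.diagonal d * P⁻¹)
    (hN : N ≠ 0) (hnil : IsNilpotent N) :
    ∃ X : Matrix (Fin n) (Fin n) ℂ, frob (mcomm X H) N ≠ 0 := by
  by_contra hc
  push_neg at hc
  set M : Matrix (Fin n) (Fin n) ℂ := H * Nᴴ - Nᴴ * H with hM
  -- Step 1: trace (X * M) = 0 for all X
  have h1 : ∀ X : Matrix (Fin n) (Fin n) ℂ, (X * M).trace = 0 := by
    intro X
    have h := hc X
    unfold frob mcomm at h
    rw [sub_mul, Matrix.trace_sub] at h
    rw [hM, Matrix.mul_sub, Matrix.trace_sub, ← Matrix.mul_assoc, ← Matrix.mul_assoc]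
    rwa [show (X * Nᴴ * H).trace = (H * X * Nᴴ).trace by
      rw [Matrix.trace_mul_comm, Matrix.mul_assoc]]
  -- Step 2: M = 0
  have h2 : M = 0 := by
    have htr := h1 Mᴴ
    have heq : (Mᴴ * M).trace = ∑ j, ∑ i, (Complex.normSq (M i j) : ℂ) := by
      rw [Matrix.trace]
      congr 1; ext j
      simp [Matrix.mul_apply, Matrix.conjTranspose_apply,
        Complex.normSq_eq_conj_mul_self]
    rw [heq] at htr
    have hre : ∑ j, ∑ i, Complex.normSq (M i j) = 0 := by exact_mod_cast htr
    ext i j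
    have hj := (Finset.sum_eq_zero_iff_of_nonneg (fun j _ =>
      Finset.sum_nonneg (fun i _ => Complex.normSq_nonneg _))).mp hre j (Finset.mem_univ j)
    have hi := (Finset.sum_eq_zero_iff_of_nonneg (fun i _ =>
      Complex.normSq_nonneg _)).mp hj i (Finset.mem_univ i)
    simpa using Complex.normSq_eq_zero.mp hi
  have hHN : H * Nᴴ = Nᴴ * H := sub_eq_zero.mp h2
  -- Step 3: A := P⁻¹ Nᴴ P commutes with diagonal d
  set A : Matrix (Fin n) (Fin n) ℂ := P⁻¹ * (Nᴴ * P) with hA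
  have hcomm : Matrix.diagonal d * A = A * Matrix.diagonal d := by
    have h := congrArg (fun Z => P⁻¹ * Z * P) hHN
    simp only [hH, Matrix.mul_assoc, Matrix.inv_mul_cancel_left_of_invertible,
      Matrix.inv_mul_of_invertible, Matrix.mul_one] at h
    rw [hA, Matrix.mul_assoc, Matrix.mul_assoc]
    exact h
  -- Step 4: A is diagonal
  have hdiag : A = Matrix.diagonal (fun i => A i i) := by
    ext i j
    by_cases hij : i = j
    · subst hij; simp
    · have := congrFun (congrFun hcomm i) j
      rw [Matrix.diagonal_mul, Matrix.mul_diagonal] at this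
      have hz : (d i - d j) * A i j = 0 := by linear_combination this
      rcases mul_eq_zero.mp hz with h | h
      · exact absurd (hd (sub_eq_zero.mp h)) hij
      · simp [Matrix.diagonal_apply_ne _ hij, h]
  -- Step 5: A is nilpotent, hence 0
  obtain ⟨k, hk⟩ := hnil
  rcases Nat.eq_zero_or_pos k with rfl | hkpos
  · exact hN (by simpa using congrArg (fun Z => N * Z) hk)
  have hApow : ∀ m : ℕ, A ^ m = P⁻¹ * (Nᴴ ^ m * P) := by
    intro m
    induction m with
    | zero => simp
    | succ m ih =>
      rw [pow_succ, ih, hA, pow_succ, Matrix.mul_assoc, Matrix.mul_assoc,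
        ← Matrix.mul_assoc P P⁻¹, Matrix.mul_inv_of_invertible, Matrix.one_mul]
      simp [Matrix.mul_assoc]
  have hNHk : Nᴴ ^ k = 0 := by
    rw [← Matrix.conjTranspose_pow, hk, Matrix.conjTranspose_zero]
  have hAk : A ^ k = 0 := by rw [hApow, hNHk, Matrix.zero_mul, Matrix.mul_zero]
  have hA0 : A = 0 := by
    rw [hdiag] at hAk ⊢
    rw [Matrix.diagonal_pow] at hAk
    have : ∀ i, A i i = 0 := by
      intro i
      have := congrFun (congrFun hAk i) i
      simp only [Matrix.diagonal_apply_eq, Matrix.zero_apply, Pi.pow_apply] at this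
      exact (pow_eq_zero_iff hkpos.ne').mp this
    ext i j
    simp [Matrix.diagonal_apply]
    intro h; subst h; exact this i
  -- Conclude N = 0, contradiction
  have : Nᴴ = 0 := by
    have := congrArg (fun Z => P * Z * P⁻¹) hA0
    simp only [hA, Matrix.mul_inv_cancel_left_of_invertible, Matrix.mul_zero,
      Matrix.zero_mul, Matrix.mul_assoc, Matrix.mul_inv_of_invertible, Matrix.mul_one] at this
    exact this
  exact hN (by simpa using congrArg Matrix.conjTranspose this)
end

section
/- Let H be an n×n complex matrix with n distinct eigenvalues and let z be a unitary matrix with columns z₁,…,zₙ. Define Φ(z) = z₁ᵗ·H·(conj z₂). Then there exists an n×n complex matrix X₀ such that trace([X₀,H]·(z⁻¹·(e₂⊗e₁)·z)*) ≠ 0, where e₂⊗e₁ is the matrix with (2,1)-entry 1 and zeros elsewhere. (Hence 0 is a regular value argument: the 'gradient' pairing of Φ does not vanish identically.) -/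
open Matrix BigOperators

private lemma trace_stdBasisMatrix_mul {n : ℕ} (i j : Fin n) (N : Matrix (Fin n) (Fin n) ℂ) :
    (Matrix.single j i (1:ℂ) * N).trace = N i j := by
  rw [Matrix.trace]
  rw [Finset.sum_eq_single j]
  · simp
  · intro k _ hk
    simp [Matrix.diag_apply, Matrix.single_mul_apply_of_ne (1:ℂ) j i k k hk N]
  · simp

private lemma conjT_std {n : ℕ} (i j : Fin n) :
    (Matrix.single i j (1:ℂ))ᴴ = Matrix.single j i (1:ℂ) := by
  ext a b
  simp [Matrix.conjTranspose_apply, Matrix.single, and_comm, apply_ite (star : ℂ → ℂ)]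

theorem exists_regular_direction {n : ℕ} (hn : 2 ≤ n)
    (H P : Matrix (Fin n) (Fin n) ℂ) [Invertible P]
    (d : Fin n → ℂ) (hd : Function.Injective d)
    (hH : H = P * Matrix.diagonal d * P⁻¹)
    (z : Matrix (Fin n) (Fin n) ℂ)
    (hz : z ∈ Matrix.unitaryGroup (Fin n) ℂ) :
    ∃ X₀ : Matrix (Fin n) (Fin n) ℂ,
      frob (mcomm X₀ H)
        (star z * Matrix.single (⟨1, by omega⟩ : Fin n) (⟨0, by omega⟩ : Fin n) 1 * z)
        ≠ 0 := by
  by_contra hcon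
  push_neg at hcon
  set i1 : Fin n := ⟨1, by omega⟩ with hi1
  set i0 : Fin n := ⟨0, by omega⟩ with hi0
  have hne : i1 ≠ i0 := by simp [hi1, hi0, Fin.ext_iff]
  set E : Matrix (Fin n) (Fin n) ℂ := Matrix.single i1 i0 1 with hE
  set M : Matrix (Fin n) (Fin n) ℂ := star z * E * z with hM
  have hzz : z * star z = 1 := (Matrix.mem_unitaryGroup_iff).mp hz
  have hMH : Mᴴ = star z * Eᴴ * z := by
    rw [hM, Matrix.conjTranspose_mul, Matrix.conjTranspose_mul,
      Matrix.star_eq_conjTranspose, Matrix.conjTranspose_conjTranspose,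
      ← Matrix.star_eq_conjTranspose z, Matrix.mul_assoc]
  have hEH : Eᴴ = Matrix.single i0 i1 (1:ℂ) := conjT_std i1 i0
  have hMH2 : Mᴴ * Mᴴ = 0 := by
    have hEE : Eᴴ * Eᴴ = 0 := by
      rw [hEH]; exact Matrix.single_mul_single_of_ne 1 i0 i1 i0 hne 1
    calc Mᴴ * Mᴴ = star z * Eᴴ * (z * star z) * Eᴴ * z := by
          rw [hMH]; simp only [Matrix.mul_assoc]
      _ = star z * (Eᴴ * Eᴴ) * z := by rw [hzz]; simp only [Matrix.mul_one, Matrix.mul_assoc]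
      _ = 0 := by rw [hEE]; simp
  have key : ∀ X : Matrix (Fin n) (Fin n) ℂ, (X * (H * Mᴴ - Mᴴ * H)).trace = 0 := by
    intro X
    have h0 := hcon X
    simp only [frob, mcomm] at h0
    rw [Matrix.sub_mul, Matrix.trace_sub] at h0
    rw [Matrix.mul_sub, Matrix.trace_sub, ← Matrix.mul_assoc, ← Matrix.mul_assoc,
      Matrix.trace_mul_comm (X * Mᴴ) H, ← Matrix.mul_assoc]
    exact h0
  have hcomm : H * Mᴴ = Mᴴ * H := by
    have hN0 : H * Mᴴ - Mᴴ * H = 0 := by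
      ext i j
      have := key (Matrix.single j i 1)
      rw [trace_stdBasisMatrix_mul] at this
      simpa using this
    have := sub_eq_zero.mp hN0
    exact this
  -- conjugate by P
  set A : Matrix (Fin n) (Fin n) ℂ := P⁻¹ * Mᴴ * P with hA
  have hPinv : P⁻¹ * P = 1 := Matrix.nonsing_inv_mul P (Matrix.isUnit_det_of_invertible P)
  have hPinv' : P * P⁻¹ = 1 := Matrix.mul_nonsing_inv P (Matrix.isUnit_det_of_invertible P)
  have hDA : Matrix.diagonal d * A = A * Matrix.diagonal d := by
    have h1 : P⁻¹ * (H * Mᴴ) * P = P⁻¹ * (Mᴴ * H) * P := by rw [hcomm]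
    calc Matrix.diagonal d * A
        = P⁻¹ * (P * Matrix.diagonal d * P⁻¹ * Mᴴ) * P := by
          rw [hA]; simp only [Matrix.mul_assoc, ← Matrix.mul_assoc P⁻¹ P, hPinv, Matrix.one_mul]
      _ = P⁻¹ * (Mᴴ * (P * Matrix.diagonal d * P⁻¹)) * P := by rw [← hH, hcomm]
      _ = A * Matrix.diagonal d := by
          rw [hA]; simp only [Matrix.mul_assoc, ← Matrix.mul_assoc P⁻¹ P, hPinv,
            Matrix.one_mul, hPinv', Matrix.mul_one]
  have hAoff : ∀ i j : Fin n, i ≠ j → A i j = 0 := by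
    intro i j hij
    have := congrFun (congrFun hDA i) j
    rw [Matrix.diagonal_mul, Matrix.mul_diagonal] at this
    have hdij : d i ≠ d j := fun h => hij (hd h)
    have : A i j * (d i - d j) = 0 := by linear_combination this
    rcases mul_eq_zero.mp this with h | h
    · exact h
    · exact absurd (sub_eq_zero.mp h) hdij
  have hAA : A * A = 0 := by
    calc A * A = P⁻¹ * Mᴴ * (P * P⁻¹) * Mᴴ * P := by
          rw [hA]; simp only [Matrix.mul_assoc]
      _ = P⁻¹ * (Mᴴ * Mᴴ) * P := by rw [hPinv']; simp only [Matrix.mul_one, Matrix.mul_assoc]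
      _ = 0 := by rw [hMH2]; simp
  have hAdiag : ∀ i : Fin n, A i i = 0 := by
    intro i
    have h1 : (A * A) i i = 0 := by rw [hAA]; simp
    rw [Matrix.mul_apply] at h1
    rw [Finset.sum_eq_single i] at h1
    · exact pow_eq_zero_iff (n := 2) (by norm_num) |>.mp (by rw [sq]; exact h1)
    · intro k _ hk
      rw [hAoff i k (Ne.symm hk), zero_mul]
    · simp
  have hA0 : A = 0 := by
    ext i j
    by_cases h : i = j
    · subst h; simpa using hAdiag i
    · simpa using hAoff i j h
  have hMH0 : Mᴴ = 0 := by
    have : P * A * P⁻¹ = Mᴴ := by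
      rw [hA]; simp only [Matrix.mul_assoc, hPinv', Matrix.mul_one, ← Matrix.mul_assoc P P⁻¹,
        hPinv', Matrix.one_mul]
    rw [← this, hA0]; simp
  have hE0 : Eᴴ = 0 := by
    have h1 : z * Mᴴ * star z = Eᴴ := by
      rw [hMH]
      calc z * (star z * Eᴴ * z) * star z = (z * star z) * Eᴴ * (z * star z) := by
            simp only [Matrix.mul_assoc]
        _ = Eᴴ := by rw [hzz]; simp
    rw [← h1, hMH0]; simp
  have : (1:ℂ) = 0 := by
    have := congrFun (congrFun hE0 i0) i1
    rw [hEH] at this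
    simp at this
  exact one_ne_zero this
end
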